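/- Let λ₁, λ₂ > 0 and let k > 0 be a root of j₁, i.e. sin(k)/k² − cos(k)/k = 0. Let ψ_k(y) := (sin(k|y|)/(k²|y|³) − cos(k|y|)/(k|y|²)) y on ℝ³ ∖ {0}. Then for every y ∈ ℝ³ with |y| = 1 (so that the outward unit normal to the unit ball at y is n = y), the stress tensor satisfies Σ(ψ_k)(y) · y = (2λ₁ + λ₂) sin(k) · y. That is, ψ_k satisfies the scalar Neumann boundary condition Σ(ψ_k) n = q n on the unit sphere with the constant q = (2λ₁ + λ₂) sin(k). -/

import Mathlib

open Real

/-- The radial vector field `ψ_k(y) = (sin(k|y|)/(k²|y|³) − cos(k|y|)/(k|y|²)) y`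
on `ℝ³ ∖ {0}`. -/
noncomputable def psi (k : ℝ) (y : EuclideanSpace ℝ (Fin 3)) : EuclideanSpace ℝ (Fin 3) :=
  (Real.sin (k * ‖y‖) / (k ^ 2 * ‖y‖ ^ 3) - Real.cos (k * ‖y‖) / (k * ‖y‖ ^ 2)) • y

/-- The `i`-th partial derivative of a scalar function on `ℝ³`. -/
noncomputable def pd (i : Fin 3) (g : EuclideanSpace ℝ (Fin 3) → ℝ)
    (y : EuclideanSpace ℝ (Fin 3)) : ℝ :=
  fderiv ℝ g y (EuclideanSpace.single i 1)

/-- The linear–elastic stress tensor `Σ(v) = 2λ₁ ε(v) + λ₂ div(v) Id`, entrywise: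
`Σ(v)_{ij} = λ₁ (∂_j v_i + ∂_i v_j) + λ₂ (div v) δ_{ij}`. -/
noncomputable def stress (l1 l2 : ℝ) (v : EuclideanSpace ℝ (Fin 3) → EuclideanSpace ℝ (Fin 3))
    (y : EuclideanSpace ℝ (Fin 3)) (i j : Fin 3) : ℝ :=
  l1 * (pd j (fun z => v z i) y + pd i (fun z => v z j) y) +
    l2 * (∑ m : Fin 3, pd m (fun z => v z m) y) * (if i = j then (1 : ℝ) else 0)

/-!
Write `ψ_k(y) = f(|y|) y` with `f = psiProfile k`. The condition `j₁(k) = 0` says exactly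
`f(1) = 0`, and it turns `f'(1)` into `sin k`. Hence on the unit sphere
`Dψ_k(y) = f'(1) y yᵀ + f(1) Id = sin k · y yᵀ`, so `ε(ψ_k)(y) = sin k · y yᵀ` and
`div ψ_k(y) = sin k`, and `Σ(ψ_k)(y) y = (2λ₁ + λ₂) sin k · y` because `|y| = 1`.
-/

noncomputable def psiProfile (k r : ℝ) : ℝ :=
  sin (k * r) / (k ^ 2 * r ^ 3) - cos (k * r) / (k * r ^ 2)

lemma hasDerivAt_psiProfile_one {k : ℝ} (hk : k ≠ 0)
    (hroot : sin k / k ^ 2 - cos k / k = 0) :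
    HasDerivAt (psiProfile k) (sin k) 1 := by
  have hlin : HasDerivAt (fun r : ℝ => k * r) k 1 := by
    simpa using (hasDerivAt_id (1 : ℝ)).const_mul k
  have hden₁ : HasDerivAt (fun r : ℝ => k ^ 2 * r ^ 3) (k ^ 2 * 3) 1 := by
    simpa using (hasDerivAt_pow 3 (1 : ℝ)).const_mul (k ^ 2)
  have hden₂ : HasDerivAt (fun r : ℝ => k * r ^ 2) (k * 2) 1 := by
    simpa using (hasDerivAt_pow 2 (1 : ℝ)).const_mul k
  have h := (((hasDerivAt_sin _).comp 1 hlin).div hden₁ (by simpa using hk)).sub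
    (((hasDerivAt_cos _).comp 1 hlin).div hden₂ (by simpa using hk))
  have hsin : sin k = k * cos k := by
    field_simp at hroot
    linear_combination hroot
  refine h.congr_deriv ?_
  simp only [Function.comp_apply, mul_one, one_pow]
  field_simp
  linear_combination (-3) * hsin

lemma hasFDerivAt_norm {E : Type*} [NormedAddCommGroup E] [InnerProductSpace ℝ E] {y : E}
    (hy : y ≠ 0) : HasFDerivAt (‖·‖) (‖y‖⁻¹ • innerSL ℝ y) y := by
  have h := (hasStrictFDerivAt_norm_sq y).hasFDerivAt.sqrt (by positivity)
  simp only [sqrt_sq (norm_nonneg _)] at h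
  convert h using 1
  ext v
  simp only [smul_apply, coe_innerSL_apply, smul_eq_mul, one_div, mul_inv_rev,
    nsmul_eq_mul, Nat.cast_ofNat]
  field_simp

lemma hasFDerivAt_radial_of_norm_eq_one {E : Type*} [NormedAddCommGroup E]
    [InnerProductSpace ℝ E] {g : ℝ → ℝ} {g' : ℝ} {y : E} (hy : ‖y‖ = 1)
    (hg : HasDerivAt g g' 1) (hg₁ : g 1 = 0) :
    HasFDerivAt (fun z => g ‖z‖ • z) (g' • (innerSL ℝ y).smulRight y) y := by
  have hnorm := hasFDerivAt_norm (y := y) (norm_ne_zero_iff.mp (by simp [hy]))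
  rw [hy, inv_one, one_smul] at hnorm
  have h := (hg.comp_hasFDerivAt_of_eq y hnorm hy.symm).smul (hasFDerivAt_id y)
  rw [Function.comp_apply, hy, hg₁] at h
  refine h.congr_fderiv ?_
  ext v
  simp [mul_smul]

lemma pd_psi_of_norm_eq_one {k : ℝ} (hk : k ≠ 0) (hroot : sin k / k ^ 2 - cos k / k = 0)
    {y : EuclideanSpace ℝ (Fin 3)} (hy : ‖y‖ = 1) (i j : Fin 3) :
    pd j (fun z => psi k z i) y = sin k * y j * y i := by
  have hpsi := hasFDerivAt_radial_of_norm_eq_one hy (hasDerivAt_psiProfile_one hk hroot)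
    (by simpa [psiProfile] using hroot)
  have hcomp : HasFDerivAt (fun z => psi k z i)
      ((EuclideanSpace.proj i).comp (sin k • (innerSL ℝ y).smulRight y)) y :=
    (EuclideanSpace.proj (𝕜 := ℝ) i).hasFDerivAt.comp y hpsi
  rw [pd, hcomp.fderiv]
  simp only [ContinuousLinearMap.comp_smulₛₗ, RingHom.id_apply, smul_apply,
    ContinuousLinearMap.comp_apply, ContinuousLinearMap.smulRight_apply, coe_innerSL_apply,
    EuclideanSpace.inner_single_right, conj_trivial, one_mul, map_smul, PiLp.proj_apply, smul_eq_mul]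
  ring

lemma sum_stress_mul_eq_of_pd_eq {v : EuclideanSpace ℝ (Fin 3) → EuclideanSpace ℝ (Fin 3)}
    {y : EuclideanSpace ℝ (Fin 3)} (hy : ‖y‖ = 1) {c : ℝ}
    (hv : ∀ i j, pd j (fun z => v z i) y = c * y j * y i) (l1 l2 : ℝ) (i : Fin 3) :
    ∑ j, stress l1 l2 v y i j * y j = (2 * l1 + l2) * c * y i := by
  have hsum : y 0 ^ 2 + y 1 ^ 2 + y 2 ^ 2 = 1 := by
    simpa [hy, Fin.sum_univ_three] using (EuclideanSpace.real_norm_sq_eq y).symm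
  simp only [stress, hv, add_mul, ite_mul, zero_mul, mul_ite, mul_zero,
    Finset.sum_add_distrib, Finset.sum_ite_eq, Finset.mem_univ, if_true]
  simp only [Fin.sum_univ_three]
  linear_combination (2 * l1 + l2) * c * y i * hsum

theorem statement_7_general (l1 l2 k : ℝ) (hk : 0 < k)
    (hroot : Real.sin k / k ^ 2 - Real.cos k / k = 0) :
    ∀ y : EuclideanSpace ℝ (Fin 3), ‖y‖ = 1 → ∀ i : Fin 3,
      (∑ j : Fin 3, stress l1 l2 (psi k) y i j * y j) =
        (2 * l1 + l2) * Real.sin k * y i := by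
  intro y hy i
  exact sum_stress_mul_eq_of_pd_eq hy (pd_psi_of_norm_eq_one hk.ne' hroot hy) l1 l2 i

/-- If `k > 0` is a root of `j₁`, i.e. `sin(k)/k² − cos(k)/k = 0`, then on the unit
sphere (where the outward unit normal at `y` is `n = y`) the stress of `ψ_k`
satisfies the scalar Neumann condition `Σ(ψ_k)(y) · y = (2λ₁ + λ₂) sin(k) · y`. -/
theorem statement_7 (l1 l2 k : ℝ) (hl1 : 0 < l1) (hl2 : 0 < l2) (hk : 0 < k)
    (hroot : Real.sin k / k ^ 2 - Real.cos k / k = 0) :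
    ∀ y : EuclideanSpace ℝ (Fin 3), ‖y‖ = 1 → ∀ i : Fin 3,
      (∑ j : Fin 3, stress l1 l2 (psi k) y i j * y j) =
        (2 * l1 + l2) * Real.sin k * y i :=
  statement_7_general l1 l2 k hk hroot
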